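/- arXiv:2405.05963 — 4 statements merged into one kernel-verified Lean document; each statement's English description precedes it below -/
import Mathlib

section
/- Let n ≥ 3 and let T be the perfect-fluid stress-energy tensor on n-dimensional Minkowski space determined by a unit timelike vector u and reals ρ, P, with trace tr T = −ρ + (n−1)P. Then T(t,t) − (tr T/(n−2)) η(t,t) ≥ 0 for every timelike vector t (the strong energy condition) if and only if ρ + P ≥ 0 and (n−3)ρ + (n−1)P ≥ 0. -/
/-- The Minkowski metric on `ℝⁿ`: `η(x,y) = -x₀y₀ + ∑_{i=1}^{n-1} xᵢyᵢ`. -/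
def minkowski {n : ℕ} (x y : Fin n → ℝ) : ℝ :=
  ∑ i : Fin n, (if (i : ℕ) = 0 then (-1 : ℝ) else 1) * x i * y i

/-- The perfect-fluid stress-energy tensor determined by a unit timelike vector `u`,
energy density `ρ` and pressure `P`: `T(x,y) = (ρ+P)η(u,x)η(u,y) + P η(x,y)`. -/
def perfectFluid {n : ℕ} (u : Fin n → ℝ) (ρ P : ℝ) (x y : Fin n → ℝ) : ℝ :=
  (ρ + P) * minkowski u x * minkowski u y + P * minkowski x y

lemma mink_peel {m : ℕ} (x y : Fin (m+1) → ℝ) :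
    minkowski x y = -(x 0 * y 0) + ∑ i : Fin m, x i.succ * y i.succ := by
  rw [minkowski, Fin.sum_univ_succ]
  simp [Fin.val_succ]

lemma mink_peel2 {m : ℕ} (x y : Fin (m+3) → ℝ) :
    minkowski x y = -(x 0 * y 0) + x 1 * y 1
      + ∑ i : Fin (m+1), x i.succ.succ * y i.succ.succ := by
  rw [minkowski, Fin.sum_univ_succ, Fin.sum_univ_succ]
  simp [Fin.val_succ]
  ring

lemma mink_quad {n : ℕ} (x y : Fin n → ℝ) (c : ℝ) :
    minkowski (fun i => x i + c * y i) (fun i => x i + c * y i)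
      = minkowski x x + 2*c*(minkowski x y) + c^2 * minkowski y y := by
  simp only [minkowski, Finset.mul_sum, ← Finset.sum_add_distrib]
  exact Finset.sum_congr rfl fun i _ => by ring

lemma mink_right {n : ℕ} (x y z : Fin n → ℝ) (c : ℝ) :
    minkowski x (fun i => y i + c * z i) = minkowski x y + c * minkowski x z := by
  simp only [minkowski, Finset.mul_sum, ← Finset.sum_add_distrib]
  exact Finset.sum_congr rfl fun i _ => by ring

lemma revCS {m : ℕ} (u t : Fin (m+1) → ℝ) (hu : minkowski u u = -1) :
    0 ≤ (minkowski u t)^2 + minkowski t t := by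
  rw [mink_peel] at hu ⊢
  rw [mink_peel]
  have hCS := Finset.sum_mul_sq_le_sq_mul_sq Finset.univ (fun i : Fin m => u i.succ) (fun i : Fin m => t i.succ)
  have hU : (0:ℝ) ≤ ∑ i : Fin m, (u i.succ)^2 := Finset.sum_nonneg fun i _ => sq_nonneg _
  have hT : (0:ℝ) ≤ ∑ i : Fin m, (t i.succ)^2 := Finset.sum_nonneg fun i _ => sq_nonneg _
  have e1 : ∑ i : Fin m, u i.succ * u i.succ = ∑ i : Fin m, (u i.succ)^2 := by
    exact Finset.sum_congr rfl fun i _ => (sq (u i.succ)).symm ▸ by ring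
  have e2 : ∑ i : Fin m, t i.succ * t i.succ = ∑ i : Fin m, (t i.succ)^2 := by
    exact Finset.sum_congr rfl fun i _ => by ring
  rw [e1] at hu
  rw [e2]
  set U := ∑ i : Fin m, (u i.succ)^2
  set T := ∑ i : Fin m, (t i.succ)^2
  set p := ∑ i : Fin m, u i.succ * t i.succ
  have hB : u 0 * u 0 = 1 + U := by linarith
  have key : U * ((-(u 0 * t 0) + p)^2 + (-(t 0 * t 0) + T))
      = (u 0 * p - U * t 0)^2 + (U*T - p^2) := by
    linear_combination (U * (t 0)^2 - p^2) * hB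
  rcases eq_or_lt_of_le hU with h0 | hpos
  · have hp : p = 0 := by nlinarith [hCS, sq_nonneg p]
    have hBA : u 0 * u 0 * (t 0 * t 0) = (1+U) * (t 0 * t 0) := by rw [hB]
    have hp2 : p^2 = 0 := by rw [hp]; ring
    have hmix : (u 0 * t 0) * p = 0 := by rw [hp]; ring
    nlinarith [hT, hp2, hmix, hBA, h0]
  · nlinarith [key, sq_nonneg (u 0 * p - U * t 0), hCS, hpos]

/-- The perfect fluid with trace `tr T = -ρ + (n-1)P` satisfies the strong energy
condition `T(t,t) - (tr T/(n-2)) η(t,t) ≥ 0` for all timelike `t` iff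
`ρ + P ≥ 0` and `(n-3)ρ + (n-1)P ≥ 0`. -/
theorem perfectFluid_sec_iff (n : ℕ) (hn : 3 ≤ n) (u : Fin n → ℝ)
    (hu : minkowski u u = -1) (ρ P : ℝ) :
    (∀ t : Fin n → ℝ, minkowski t t < 0 →
        0 ≤ perfectFluid u ρ P t t -
          ((-ρ + ((n : ℝ) - 1) * P) / ((n : ℝ) - 2)) * minkowski t t) ↔
      (0 ≤ ρ + P ∧ 0 ≤ ((n : ℝ) - 3) * ρ + ((n : ℝ) - 1) * P) := by
  obtain ⟨m, rfl⟩ : ∃ m, n = m + 3 := ⟨n - 3, by omega⟩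
  have hden : ((m + 3 : ℕ) : ℝ) - 2 = (m:ℝ) + 1 := by push_cast; ring
  have hc1 : ((m + 3 : ℕ) : ℝ) - 1 = (m:ℝ) + 2 := by push_cast; ring
  have hc3 : ((m + 3 : ℕ) : ℝ) - 3 = (m:ℝ) := by push_cast; ring
  have hm1 : (0:ℝ) < (m:ℝ) + 1 := by positivity
  have hne : ((m:ℝ) + 1) ≠ 0 := ne_of_gt hm1
  simp only [hden, hc1, hc3]
  have hK : (-ρ + ((m:ℝ)+2)*P)/((m:ℝ)+1) * ((m:ℝ)+1) = -ρ + ((m:ℝ)+2)*P :=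
    div_mul_cancel₀ _ hne
  constructor
  · intro h
    have h2 : 0 ≤ (m:ℝ) * ρ + ((m:ℝ) + 2) * P := by
      have hu' : minkowski u u < 0 := by rw [hu]; norm_num
      have h0 := h u hu'
      rw [perfectFluid, hu] at h0
      have h0' := mul_nonneg hm1.le h0
      linarith [h0', hK]
    refine ⟨?_, h2⟩
    by_contra hneg
    push_neg at hneg
    -- spatial tail of u is nonnegative
    have hu2 := hu
    rw [mink_peel2] at hu2
    have hS : 0 ≤ ∑ i : Fin (m+1), u i.succ.succ * u i.succ.succ :=
      Finset.sum_nonneg fun i _ => mul_self_nonneg _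
    have hMnz : u 1 - u 0 ≠ 0 := by
      intro hM
      have h01 : u 1 = u 0 := by linarith
      rw [h01] at hu2
      linarith
    set M := u 1 - u 0 with hMdef
    set w : Fin (m+3) → ℝ :=
      fun i => if (i:ℕ) = 0 then (1:ℝ) else if (i:ℕ) = 1 then 1 else 0 with hwdef
    have hw0 : w 0 = 1 := by simp [hwdef]
    have hw1 : w 1 = 1 := by simp [hwdef, Fin.val_one]
    have hwss : ∀ i : Fin (m+1), w i.succ.succ = 0 := by
      intro i; simp [hwdef, Fin.val_succ]
    have huw : minkowski u w = M := by
      rw [mink_peel2, hw0, hw1]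
      simp only [hwss]
      simp [hMdef]; ring
    have hww : minkowski w w = 0 := by
      rw [mink_peel2, hw0, hw1]
      simp only [hwss]
      simp
    have H : ∀ ε : ℝ, 0 < ε → ε < 1 →
        0 ≤ (ρ+P) * ((1+ε)/2)^2 * ((m:ℝ)+1) - ε*(ρ-P) := by
      intro ε hε0 hε1
      set c := (1-ε)/(2*M) with hc
      have htt : minkowski (fun i => u i + c * w i) (fun i => u i + c * w i) = -ε := by
        rw [mink_quad, hu, huw, hww, hc]
        field_simp
        ring
      have hut : minkowski u (fun i => u i + c * w i) = -(1+ε)/2 := by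
        rw [mink_right, hu, huw, hc]
        field_simp
        ring
      have h0 := h (fun i => u i + c * w i) (by rw [htt]; linarith)
      rw [perfectFluid, htt, hut] at h0
      have h0' := mul_nonneg hm1.le h0
      have hKε : (-ρ + ((m:ℝ)+2)*P)/((m:ℝ)+1) * ((m:ℝ)+1) * ε
          = (-ρ + ((m:ℝ)+2)*P) * ε := by rw [hK]
      nlinarith [h0', hKε]
    rcases le_or_gt P ρ with hPρ | hPρ
    · have hh := H (1/2) (by norm_num) (by norm_num)
      have hX : (ρ+P) * ((m:ℝ)+1) < 0 := mul_neg_of_neg_of_pos hneg hm1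
      nlinarith [hh, hX, hPρ]
    · have hA : 0 < -(ρ+P) := by linarith
      have hC : (0:ℝ) < 8*(P-ρ) := by linarith
      obtain ⟨ε₀, hε0, hε1, hεb⟩ : ∃ ε : ℝ, 0 < ε ∧ ε < 1 ∧
          ε * (8*(P-ρ)) ≤ ((m:ℝ)+1)*(-(ρ+P)) := by
        refine ⟨min (1/2 : ℝ) (((m:ℝ)+1)*(-(ρ+P))/(8*(P-ρ))), ?_, ?_, ?_⟩
        · exact lt_min (by norm_num) (div_pos (mul_pos hm1 hA) hC)
        · exact lt_of_le_of_lt (min_le_left _ _) (by norm_num)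
        · rw [← le_div_iff₀ hC]
          exact min_le_right _ _
      have hh := H ε₀ hε0 hε1
      have hX : 0 < ((m:ℝ)+1) * (-(ρ+P)) := mul_pos hm1 hA
      have p1 : 0 < ((m:ℝ)+1) * (-(ρ+P)) * ε₀ := mul_pos hX hε0
      have p2 : 0 ≤ ((m:ℝ)+1) * (-(ρ+P)) * ε₀^2 := mul_nonneg hX.le (sq_nonneg ε₀)
      linarith [hh, hεb, hX, p1, p2]
  · rintro ⟨h1, h2⟩ t ht
    have ha := revCS (m := m+2) u t hu
    rw [perfectFluid, sub_nonneg, div_mul_eq_mul_div, div_le_iff₀ hm1]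
    nlinarith [ha, ht, h1, h2, mul_nonneg (mul_nonneg hm1.le h1) ha,
      mul_nonneg h2 (neg_nonneg.mpr ht.le)]
end

section
/- For all n ≥ 2, all m ≥ 0, all field values c ∈ ℝ, all covector components v ∈ ℝⁿ, and every timelike vector t ∈ ℝⁿ, the Klein–Gordon energy density is nonnegative: (∑_μ t_μ v_μ)² − ½ η(t,t)(η*(v,v) + m²c²) ≥ 0. (The classical minimally coupled Klein–Gordon field satisfies the weak energy condition on Minkowski space.) -/
/-- Key scalar inequality: a reverse Cauchy–Schwarz-type bound. -/
lemma kleinGordon_wec_key (a b P S W M : ℝ) (hM : 0 ≤ M) (hS : 0 ≤ S) (hW : 0 ≤ W)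
    (hCS : P^2 ≤ S*W) (ht : S < a^2) :
    0 ≤ (a*b+P)^2 - (1/2)*((S - a^2))*((W - b^2) + M) := by
  have hMterm : 0 ≤ (1/2) * (a^2 - S) * M :=
    mul_nonneg (mul_nonneg (by norm_num) (sub_nonneg.2 ht.le)) hM
  rcases le_or_gt (b^2) W with hb | hb
  · nlinarith [sq_nonneg (a*b+P), mul_nonneg (sub_nonneg.2 ht.le) (sub_nonneg.2 hb)]
  · set r := Real.sqrt (S*W) with hr
    have hr0 : 0 ≤ r := Real.sqrt_nonneg _
    have hr2 : r^2 = S*W := Real.sq_sqrt (mul_nonneg hS hW)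
    have h1 : -r ≤ P := by nlinarith
    have h2 : P ≤ r := by nlinarith
    set u := |a*b| with hu
    have hu0 : 0 ≤ u := abs_nonneg _
    have hu2 : u^2 = (a*b)^2 := sq_abs _
    have hru : r ≤ u := by
      have : r^2 ≤ u^2 := by nlinarith
      exact (pow_le_pow_iff_left₀ hr0 hu0 two_ne_zero).mp this
    have hamg : 2*u*r ≤ a^2*W + S*b^2 := by
      have h : (2*u*r)^2 ≤ (a^2*W + S*b^2)^2 := by nlinarith [sq_nonneg (a^2*W - S*b^2)]
      refine (pow_le_pow_iff_left₀ (by positivity) ?_ two_ne_zero).mp h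
      positivity
    rcases le_or_gt 0 (a*b) with hab | hab
    · have : u = a*b := abs_of_nonneg hab
      nlinarith [sq_nonneg (a*b + P - u + r)]
    · have : u = -(a*b) := abs_of_neg hab
      nlinarith [sq_nonneg (a*b + P + u - r)]

/-- Splitting the Minkowski contraction into time and space parts. -/
lemma minkowski_split {k : ℕ} (x y : Fin (k+1) → ℝ) :
    minkowski x y = -(x 0 * y 0) + ∑ i : Fin k, x i.succ * y i.succ := by
  rw [minkowski, Fin.sum_univ_succ]
  simp [Fin.val_succ]

/-- The classical minimally coupled Klein–Gordon field satisfies the weak energy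
condition on Minkowski space: for field value `c`, derivative tuple `v`, mass `m ≥ 0`
and every timelike `t`, the contraction
`T(t,t) = (∑_μ t_μ v_μ)² - ½ η(t,t)(η*(v,v) + m²c²)` is nonnegative. -/
theorem kleinGordon_wec (n : ℕ) (hn : 2 ≤ n) (m : ℝ) (hm : 0 ≤ m) (c : ℝ)
    (v : Fin n → ℝ) (t : Fin n → ℝ) (ht : minkowski t t < 0) :
    0 ≤ (∑ μ : Fin n, t μ * v μ) ^ 2
        - (1 / 2) * minkowski t t * (minkowski v v + m ^ 2 * c ^ 2) := by
  obtain ⟨k, rfl⟩ : ∃ k, n = k + 1 := ⟨n - 1, by omega⟩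
  rw [minkowski_split, minkowski_split, Fin.sum_univ_succ]
  set a := t 0
  set b := v 0
  set P := ∑ i : Fin k, t i.succ * v i.succ with hP
  set S := ∑ i : Fin k, t i.succ * t i.succ with hS
  set W := ∑ i : Fin k, v i.succ * v i.succ with hW
  rw [minkowski_split] at ht
  have hS0 : 0 ≤ S := Finset.sum_nonneg fun i _ => mul_self_nonneg _
  have hW0 : 0 ≤ W := Finset.sum_nonneg fun i _ => mul_self_nonneg _
  have hCS : P^2 ≤ S * W := by
    have := Finset.sum_mul_sq_le_sq_mul_sq Finset.univ
      (fun i : Fin k => t i.succ) (fun i => v i.succ)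
    simpa [hP, hS, hW, sq] using this
  have hta : S < a^2 := by nlinarith
  have hM : 0 ≤ m^2 * c^2 := by positivity
  have := kleinGordon_wec_key a b P S W (m^2*c^2) hM hS0 hW0 hCS hta
  nlinarith [this]
end

section
/- Let n > 2 and m ≥ 0. The classical minimally coupled Klein–Gordon field on n-dimensional Minkowski space satisfies the strong energy condition pointwise — i.e. for all field values c ∈ ℝ, all derivative tuples v ∈ ℝⁿ and all timelike t ∈ ℝⁿ one has T(t,t) − (tr T/(n−2)) η(t,t) ≥ 0 — if and only if m = 0. -/
/-- The components of the Minkowski metric `η_{μν} = diag(-1,1,…,1)` on `ℝⁿ`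
(equal to its inverse `η^{μν}`). -/
def etaM (n : ℕ) : Matrix (Fin n) (Fin n) ℝ :=
  fun μ ν => if μ = ν then (if (μ : ℕ) = 0 then (-1 : ℝ) else 1) else 0

/-- The minimally coupled Klein–Gordon stress-energy tensor
`T_{μν} = v_μ v_ν - ½ η_{μν}(η*(v,v) + m²c²)`. -/
noncomputable def kgT {n : ℕ} (m c : ℝ) (v : Fin n → ℝ) : Matrix (Fin n) (Fin n) ℝ :=
  fun μ ν => v μ * v ν - (1 / 2) * etaM n μ ν * (minkowski v v + m ^ 2 * c ^ 2)

/-- The trace `tr T = η^{μν} T_{μν}` with respect to the inverse Minkowski metric. -/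
noncomputable def kgTrace {n : ℕ} (m c : ℝ) (v : Fin n → ℝ) : ℝ :=
  ∑ μ : Fin n, ∑ ν : Fin n, etaM n μ ν * kgT m c v μ ν

/-! Contracting with the metric, the kinetic terms cancel against the trace and the strong-energy
quantity of the Klein–Gordon field becomes `(v·t)² + m²c² η(t,t)/(n-2)`. For timelike `t` the
first summand is a square and the second is `≤ 0`; a massive field at rest (`c = 1`, `v = 0`,
`t = e₀`) makes the quantity negative. -/

open Finset

lemma etaM_eq_diagonal (n : ℕ) :
    etaM n = Matrix.diagonal fun μ : Fin n => if (μ : ℕ) = 0 then (-1 : ℝ) else 1 := by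
  ext μ ν
  simp [etaM, Matrix.diagonal_apply]

lemma sum_sum_etaM_mul {n : ℕ} (g : Fin n → Fin n → ℝ) :
    ∑ μ, ∑ ν, etaM n μ ν * g μ ν
      = ∑ μ : Fin n, (if (μ : ℕ) = 0 then (-1 : ℝ) else 1) * g μ μ := by
  simp [etaM_eq_diagonal, Matrix.diagonal_apply, ite_mul]

lemma sum_sum_etaM_mul_mul {n : ℕ} (t : Fin n → ℝ) :
    ∑ μ, ∑ ν, etaM n μ ν * (t μ * t ν) = minkowski t t := by
  simp only [sum_sum_etaM_mul, minkowski, mul_assoc]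

lemma sum_sum_kgT_mul_mul {n : ℕ} (m c : ℝ) (v t : Fin n → ℝ) :
    ∑ μ, ∑ ν, kgT m c v μ ν * t μ * t ν
      = (∑ μ, v μ * t μ) ^ 2 - (minkowski v v + m ^ 2 * c ^ 2) / 2 * minkowski t t := by
  have hsplit : ∀ μ ν, kgT m c v μ ν * t μ * t ν = v μ * t μ * (v ν * t ν)
      - (minkowski v v + m ^ 2 * c ^ 2) / 2 * (etaM n μ ν * (t μ * t ν)) := by
    intro μ ν
    simp only [kgT]
    ring
  simp only [hsplit, sum_sub_distrib, ← mul_sum, sum_sum_etaM_mul_mul, sq, sum_mul_sum]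

lemma kgTrace_eq {n : ℕ} (m c : ℝ) (v : Fin n → ℝ) :
    kgTrace m c v = minkowski v v - n / 2 * (minkowski v v + m ^ 2 * c ^ 2) := by
  have hdiag : ∀ μ : Fin n, (if (μ : ℕ) = 0 then (-1 : ℝ) else 1) * kgT m c v μ μ
      = (if (μ : ℕ) = 0 then (-1 : ℝ) else 1) * v μ * v μ
        - (minkowski v v + m ^ 2 * c ^ 2) / 2 := by
    intro μ
    split_ifs <;> simp [kgT, etaM, *] <;> ring
  rw [kgTrace, sum_sum_etaM_mul fun μ ν => kgT m c v μ ν, sum_congr rfl fun μ _ => hdiag μ,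
    sum_sub_distrib, ← minkowski, sum_const, card_univ, Fintype.card_fin, nsmul_eq_mul]
  ring

lemma minkowski_single_zero {n : ℕ} (hn : 0 < n) :
    minkowski (Pi.single ⟨0, hn⟩ 1 : Fin n → ℝ) (Pi.single ⟨0, hn⟩ 1) = -1 := by
  rw [minkowski, sum_eq_single ⟨0, hn⟩]
  · simp
  · intro μ _ hμ
    simp [hμ]
  · simp

lemma strongEnergy_kgT_eq {n : ℕ} (hn : n ≠ 2) (m c : ℝ) (v t : Fin n → ℝ) :
    ∑ μ, ∑ ν, kgT m c v μ ν * t μ * t ν - kgTrace m c v / ((n : ℝ) - 2) * minkowski t t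
      = (∑ μ, v μ * t μ) ^ 2 + m ^ 2 * c ^ 2 * minkowski t t / ((n : ℝ) - 2) := by
  have hn' : (n : ℝ) - 2 ≠ 0 := sub_ne_zero.mpr (by exact_mod_cast hn)
  rw [sum_sum_kgT_mul_mul, kgTrace_eq]
  field_simp
  ring

theorem kleinGordon_sec_iff_massless_general (n : ℕ) (hn : 2 < n) (m : ℝ) :
    (∀ (c : ℝ) (v t : Fin n → ℝ), minkowski t t < 0 →
        0 ≤ (∑ μ : Fin n, ∑ ν : Fin n, kgT m c v μ ν * t μ * t ν)
            - (kgTrace m c v / ((n : ℝ) - 2)) * minkowski t t) ↔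
      m = 0 := by
  have hn2 : (0 : ℝ) < n - 2 := sub_pos.mpr (by exact_mod_cast hn)
  simp only [strongEnergy_kgT_eq hn.ne']
  constructor
  · intro hsec
    have hrest := hsec 1 0 (Pi.single ⟨0, by omega⟩ 1) (by rw [minkowski_single_zero]; norm_num)
    rw [minkowski_single_zero] at hrest
    simp only [Pi.zero_apply, zero_mul, sum_const_zero, one_pow, mul_one, mul_neg_one,
      zero_pow two_ne_zero, zero_add] at hrest
    rw [le_div_iff₀ hn2, zero_mul, neg_nonneg] at hrest
    exact pow_eq_zero_iff two_ne_zero |>.mp (hrest.antisymm (sq_nonneg m))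
  · rintro rfl c v t -
    rw [zero_pow two_ne_zero, zero_mul, zero_mul, zero_div, add_zero]
    positivity

/-- For `n > 2` and `m ≥ 0`, the classical minimally coupled Klein–Gordon field
satisfies the strong energy condition pointwise — i.e.
`T(t,t) - (tr T/(n-2)) η(t,t) ≥ 0` for all field values `c`, derivative tuples `v`
and timelike `t` — if and only if `m = 0`. -/
theorem kleinGordon_sec_iff_massless (n : ℕ) (hn : 2 < n) (m : ℝ) (hm : 0 ≤ m) :
    (∀ (c : ℝ) (v t : Fin n → ℝ), minkowski t t < 0 →
        0 ≤ (∑ μ : Fin n, ∑ ν : Fin n, kgT m c v μ ν * t μ * t ν)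
            - (kgTrace m c v / ((n : ℝ) - 2)) * minkowski t t) ↔
      m = 0 :=
  kleinGordon_sec_iff_massless_general n hn m
end

section
/- Let r₀ > 0 and let Φ, b : [r₀, ∞) → ℝ with b continuous, and define g(r) = e^{−2Φ(r)}(1 − b(r)/r). Suppose g is continuous on [r₀, ∞), differentiable on (r₀, ∞), g(r₀) = 0, and g(r) > 0 for all r > r₀. Then there exists r* > r₀ such that −(e^{2Φ(r*)}/(8π r*)) g'(r*) < 0, i.e. the radial null energy T_{μν}ℓ^μℓ^ν = −(e^{2Φ}/(8πr)) (d/dr)[e^{−2Φ}(1 − b/r)] is strictly negative at some radius outside the throat. -/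
open Real

/-- In a Morris–Thorne wormhole with throat at `r₀` (so that
`g(r) = e^{-2Φ(r)}(1 - b(r)/r)` vanishes at `r₀` and is positive for `r > r₀`),
the radial null energy `T_{μν}ℓ^μℓ^ν = -(e^{2Φ}/(8πr)) g'(r)` is strictly negative
at some radius `r* > r₀`: the null energy condition is violated outside the throat. -/
theorem morrisThorne_nec_violated (r₀ : ℝ) (hr₀ : 0 < r₀) (Φ b : ℝ → ℝ)
    (hb : ContinuousOn b (Set.Ici r₀))
    (g : ℝ → ℝ) (hg : ∀ r, g r = Real.exp (-2 * Φ r) * (1 - b r / r))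
    (hgc : ContinuousOn g (Set.Ici r₀))
    (hgd : ∀ r ∈ Set.Ioi r₀, DifferentiableAt ℝ g r)
    (hg0 : g r₀ = 0) (hgpos : ∀ r, r₀ < r → 0 < g r) :
    ∃ rs : ℝ, r₀ < rs ∧
      -(Real.exp (2 * Φ rs) / (8 * π * rs)) * deriv g rs < 0 := by
  have hab : r₀ < r₀ + 1 := by linarith
  obtain ⟨c, hc, hc'⟩ := exists_deriv_eq_slope g hab
    (hgc.mono (Set.Icc_subset_Ici_self))
    (fun x hx => (hgd x hx.1).differentiableWithinAt)
  refine ⟨c, hc.1, ?_⟩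
  have hderiv : 0 < deriv g c := by
    rw [hc', hg0, sub_zero]
    have h1 := hgpos (r₀ + 1) hab
    have h2 : (0:ℝ) < r₀ + 1 - r₀ := by linarith
    positivity
  have hrc : 0 < c := lt_trans hr₀ hc.1
  have hpre : 0 < Real.exp (2 * Φ c) / (8 * π * c) := by
    have := Real.pi_pos
    positivity
  nlinarith
end
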